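/- Let h_1,…,h_B ∈ ℂ^L and let k ∈ {0,…,N−1}. The range of the per-subcarrier interference map Φ_k : ℂ^{N+P} → ℂ^B, (Φ_k(w))_b = (F · T(h_b) w)_k, equals the column space of the effective jammer channel matrix 𝗝[k] = [√N ĵ[k], R[k]] ∈ ℂ^{B×(P+1)}, where ĵ[k]_b = (F pad(h_b))_k and the b-th row of R[k] is the k-th row of F multiplied by T^(p)(h_b). -/

import Mathlib

open Matrix

/-- The unitary `N`-point DFT matrix. -/
noncomputable def dft (N : ℕ) : Matrix (Fin N) (Fin N) ℂ :=
  Matrix.of fun k n : Fin N =>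
    ((1 / Real.sqrt N : ℝ) : ℂ) *
      Complex.exp (-2 * (Real.pi : ℂ) * Complex.I * ((k : ℕ) : ℂ) * ((n : ℕ) : ℂ) / (N : ℂ))

/-- Cyclic convolution on `ℂ^N`. -/
noncomputable def cconv {N : ℕ} (c x : Fin N → ℂ) : Fin N → ℂ := fun n => ∑ m, c m * x (n - m)

/-- Zero-padding of `h ∈ ℂ^L` to length `N`. -/
noncomputable def pad (N : ℕ) {L : ℕ} (hLN : L ≤ N) (h : Fin L → ℂ) : Fin N → ℂ :=
  fun n => if hn : (n : ℕ) < L then h ⟨n, hn⟩ else 0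

/-- Toeplitz channel matrix `T(h) ∈ ℂ^{N×(N+P)}`. -/
noncomputable def toep (N : ℕ) {L : ℕ} (P : ℕ) (h : Fin L → ℂ) : Matrix (Fin N) (Fin (N + P)) ℂ :=
  Matrix.of fun (n : Fin N) (m : Fin (N + P)) =>
    if hk : 0 ≤ (P : ℤ) + (n : ℕ) - (m : ℕ) ∧ (P : ℤ) + (n : ℕ) - (m : ℕ) ≤ (L : ℤ) - 1
    then h ⟨((P : ℤ) + (n : ℕ) - (m : ℕ)).toNat, by omega⟩ else 0

/-- First `P` columns of `T(h)`. -/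
noncomputable def toepP (N : ℕ) {L : ℕ} (P : ℕ) (h : Fin L → ℂ) : Matrix (Fin N) (Fin P) ℂ :=
  Matrix.of fun n m => toep N P h n ⟨(m : ℕ), by have := m.isLt; omega⟩

/-- Last `N` entries of `w ∈ ℂ^{N+P}`. -/
noncomputable def wStar (N P : ℕ) (w : Fin (N + P) → ℂ) : Fin N → ℂ :=
  fun n => w ⟨P + (n : ℕ), by have := n.isLt; omega⟩

/-- First `P` entries of `w` minus the last `P` entries of `w*`. -/
noncomputable def deltaP (N P : ℕ) (hPN : P ≤ N) (w : Fin (N + P) → ℂ) : Fin P → ℂ :=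
  fun m => w ⟨(m : ℕ), by have := m.isLt; omega⟩ -
    wStar N P w ⟨N - P + (m : ℕ), by have := m.isLt; omega⟩

/-- Cyclic-prefixed sequence: prepend the last `P` entries of `x` to `x`. -/
noncomputable def cyclicPrefix (N P : ℕ) (hPN : P ≤ N) (x : Fin N → ℂ) : Fin (N + P) → ℂ :=
  fun m => if hm : (m : ℕ) < P then x ⟨N - P + (m : ℕ), by omega⟩
           else x ⟨(m : ℕ) - P, by have := m.isLt; omega⟩

/-- Effective jammer channel matrix `𝗝[k] = [√N ĵ[k], R[k]]`. -/
noncomputable def effJ (N : ℕ) {L : ℕ} (P B : ℕ) (hLN : L ≤ N) (h : Fin B → Fin L → ℂ)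
    (k : Fin N) : Matrix (Fin B) (Fin (P + 1)) ℂ :=
  Matrix.of fun b : Fin B =>
    Fin.cons ((Real.sqrt N : ℂ) * (dft N *ᵥ pad N hLN (h b)) k)
      (fun m : Fin P => Matrix.vecMul (dft N k) (toepP N P (h b)) m)

/-!
Split `w ∈ ℂ^{N+P}` as a cyclically prefixed block `x ∈ ℂ^N` plus a vector `δ` supported on the
first `P` entries. Since `P ≥ L - 1`, the Toeplitz matrix `T(h)` acts on the cyclically prefixed
part as cyclic convolution with `pad h`, which the DFT turns into multiplication, so the `k`-th
output is `√N ĵ[k] (F x)_k`; on `δ` it acts as `T^(p)(h)`. Hence `Φ_k w = 𝗝[k] [(F x)_k; δ]`, and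
both the splitting `(x, δ) ↦ w` and the coordinate map `(x, δ) ↦ [(F x)_k; δ]` are onto.
-/

section Padding

variable {N L : ℕ}

lemma sum_pad_mul (hLN : L ≤ N) (g : Fin L → ℂ) (f : Fin N → ℂ) :
    ∑ n, pad N hLN g n * f n = ∑ ℓ, g ℓ * f (Fin.castLE hLN ℓ) := by
  refine (Fintype.sum_of_injective (Fin.castLE hLN) (Fin.castLE_injective hLN) _ _
    (fun n hn => ?_) (fun ℓ => ?_)).symm
  · have : ¬ (n : ℕ) < L := fun h => hn ⟨⟨n, h⟩, rfl⟩
    simp [pad, this]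
  · simp [pad]

end Padding

section CyclicPrefix

variable {N P : ℕ} (hPN : P ≤ N)

lemma cyclicPrefix_apply_of_add_eq (x : Fin N → ℂ) {m : Fin (N + P)} {n ℓ : Fin N}
    (hm : (m : ℕ) + ℓ = P + n) : cyclicPrefix N P hPN x m = x (n - ℓ) := by
  unfold cyclicPrefix
  split_ifs with hmP <;> congr 1 <;> simp only [Fin.ext_iff, Fin.sub_def]
  · rw [show N - ℓ + (n : ℕ) = N - P + m by omega, Nat.mod_eq_of_lt (by omega)]
  · rw [show N - ℓ + (n : ℕ) = m - P + N by omega, Nat.add_mod_right, Nat.mod_eq_of_lt (by omega)]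

lemma cyclicPrefix_add_pad (w : Fin (N + P) → ℂ) :
    cyclicPrefix N P hPN (wStar N P w) + pad (N + P) (Nat.le_add_left P N) (deltaP N P hPN w)
      = w := by
  funext m
  simp only [Pi.add_apply, cyclicPrefix, wStar, deltaP, pad]
  split_ifs with hm
  · ring
  · rw [add_zero]
    congr 1
    ext
    simp only
    omega

end CyclicPrefix

section Toeplitz

variable {N L P : ℕ}

lemma toep_mulVec_apply (hP : L - 1 ≤ P) (g : Fin L → ℂ) (w : Fin (N + P) → ℂ) (n : Fin N) :
    (toep N P g *ᵥ w) n = ∑ ℓ : Fin L, g ℓ * w ⟨P + n - ℓ, by omega⟩ := by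
  refine (Fintype.sum_of_injective (fun ℓ : Fin L => (⟨P + n - ℓ, by omega⟩ : Fin (N + P)))
    (fun a b hab => ?_) _ _ (fun m hm => ?_) (fun ℓ => ?_)).symm
  · simp only [Fin.mk.injEq] at hab
    omega
  · simp only [toep, of_apply]
    rw [dif_neg, zero_mul]
    rintro ⟨h₀, hL⟩
    exact hm ⟨⟨(P + n - m : ℤ).toNat, by omega⟩, by ext; simp only; omega⟩
  · simp only [toep, of_apply]
    rw [dif_pos (by omega)]
    congr
    ext
    simp only
    omega

lemma toep_mulVec_pad (g : Fin L → ℂ) (δ : Fin P → ℂ) :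
    toep N P g *ᵥ pad (N + P) (Nat.le_add_left P N) δ = toepP N P g *ᵥ δ := by
  funext n
  simp only [mulVec, dotProduct]
  simp_rw [mul_comm (toep N P g n _), sum_pad_mul, mul_comm (δ _)]
  rfl

lemma toep_mulVec_cyclicPrefix (hLN : L ≤ N) (hP : L - 1 ≤ P) (hPN : P ≤ N) (g : Fin L → ℂ)
    (x : Fin N → ℂ) : toep N P g *ᵥ cyclicPrefix N P hPN x = cconv (pad N hLN g) x := by
  funext n
  rw [toep_mulVec_apply hP, cconv, sum_pad_mul]
  refine Finset.sum_congr rfl fun ℓ _ => ?_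
  rw [cyclicPrefix_apply_of_add_eq hPN x (n := n) (ℓ := Fin.castLE hLN ℓ)
    (by simp only [Fin.val_castLE]; omega)]

end Toeplitz

section DFT

variable {N : ℕ}

open Complex Real in
lemma dft_apply_eq_pow (k n : Fin N) :
    dft N k n = ((1 / √N : ℝ) : ℂ) * cexp (-2 * π * I / N) ^ ((k : ℕ) * n) := by
  rw [dft, of_apply, ← Complex.exp_nat_mul]
  congr 2
  push_cast
  ring

open Complex Real in
lemma dft_apply_add (k a b : Fin N) :
    dft N k (a + b) = (√N : ℂ) * dft N k a * dft N k b := by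
  have hN : (N : ℂ) ≠ 0 := Nat.cast_ne_zero.2 k.pos.ne'
  have hζ : cexp (-2 * π * I / N) ^ N = 1 := by
    rw [← Complex.exp_nat_mul, show (N : ℂ) * (-2 * π * I / N) = -(2 * π * I) by field_simp,
      Complex.exp_neg, exp_two_pi_mul_I, inv_one]
  have hsqrt : (√N : ℂ) * ((1 / √N : ℝ) : ℂ) = 1 := by
    rw [← ofReal_mul, mul_one_div_cancel (by simpa using k.pos.ne'), ofReal_one]
  rw [dft_apply_eq_pow, dft_apply_eq_pow, dft_apply_eq_pow, Fin.val_add, pow_eq_pow_mod _ hζ,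
    Nat.mul_mod, Nat.mod_mod, ← Nat.mul_mod, ← pow_eq_pow_mod _ hζ, mul_add, pow_add]
  linear_combination -(((1 / √N : ℝ) : ℂ) * cexp (-2 * π * I / N) ^ ((k : ℕ) * a) *
    cexp (-2 * π * I / N) ^ ((k : ℕ) * b)) * hsqrt

lemma dft_mulVec_cconv (c x : Fin N → ℂ) (k : Fin N) :
    (dft N *ᵥ cconv c x) k = (√N : ℂ) * (dft N *ᵥ c) k * (dft N *ᵥ x) k := by
  have : NeZero N := NeZero.of_pos k.pos
  simp only [mulVec, dotProduct, cconv, Finset.mul_sum, Finset.sum_mul]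
  rw [Finset.sum_comm]
  conv_rhs => rw [Finset.sum_comm]
  refine Finset.sum_congr rfl fun m _ => ?_
  rw [← Equiv.sum_comp (Equiv.addRight m)]
  refine Finset.sum_congr rfl fun j _ => ?_
  rw [Equiv.coe_addRight, add_sub_cancel_right, dft_apply_add]
  ring

lemma dft_ne_zero (k n : Fin N) : dft N k n ≠ 0 := by
  rw [dft, of_apply]
  exact mul_ne_zero (by simpa using k.pos.ne') (Complex.exp_ne_zero _)

lemma surjective_dft_mulVec_apply (k : Fin N) : Function.Surjective fun x => (dft N *ᵥ x) k :=
  fun c => ⟨Pi.single k (c / dft N k k), by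
    simp only [mulVec, dotProduct_single, mul_div_cancel₀ _ (dft_ne_zero k k)]⟩

end DFT

lemma effJ_mulVec_cons {N L : ℕ} (P B : ℕ) (hLN : L ≤ N) (h : Fin B → Fin L → ℂ) (k : Fin N)
    (a : ℂ) (δ : Fin P → ℂ) :
    effJ N P B hLN h k *ᵥ Fin.cons a δ = fun b =>
      (√N : ℂ) * (dft N *ᵥ pad N hLN (h b)) k * a + (dft N *ᵥ (toepP N P (h b) *ᵥ δ)) k := by
  funext b
  rw [mulVec, dotProduct, Fin.sum_univ_succ]
  simp only [effJ, of_apply, Fin.cons_zero, Fin.cons_succ]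
  congr 1
  exact (dotProduct_mulVec (dft N k) _ δ).symm

theorem stmt12_general (N L P B : ℕ) (hLN : L ≤ N) (hP : L - 1 ≤ P) (hPN : P ≤ N)
    (h : Fin B → Fin L → ℂ) (k : Fin N) :
    Set.range (fun w : Fin (N + P) → ℂ =>
        fun b : Fin B => (dft N *ᵥ (toep N P (h b) *ᵥ w)) k) =
      Set.range (fun v : Fin (P + 1) → ℂ => effJ N P B hLN h k *ᵥ v) := by
  have hsplit : Function.Surjective fun p : (Fin N → ℂ) × (Fin P → ℂ) =>
      cyclicPrefix N P hPN p.1 + pad (N + P) (Nat.le_add_left P N) p.2 :=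
    fun w => ⟨(wStar N P w, deltaP N P hPN w), cyclicPrefix_add_pad hPN w⟩
  have hcoords : Function.Surjective fun p : (Fin N → ℂ) × (Fin P → ℂ) =>
      (Fin.cons ((dft N *ᵥ p.1) k) p.2 : Fin (P + 1) → ℂ) := fun v => by
    obtain ⟨x, hx⟩ := surjective_dft_mulVec_apply k (v 0)
    exact ⟨(x, Fin.tail v), by simp only [hx, Fin.cons_self_tail]⟩
  rw [← hsplit.range_comp, ← hcoords.range_comp]
  congr 1
  funext ⟨x, δ⟩
  simp only [Function.comp_apply, mulVec_add, toep_mulVec_cyclicPrefix hLN hP hPN,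
    toep_mulVec_pad, effJ_mulVec_cons, Pi.add_apply, dft_mulVec_cconv]

/-- The range of the per-subcarrier interference map
`Φ_k : w ↦ (b ↦ (F · T(h_b) w)_k)` equals the column space of the effective jammer channel
matrix `𝗝[k]`. -/
theorem stmt12 (N L P B : ℕ) (hL : 1 ≤ L) (hLN : L ≤ N) (hP : L - 1 ≤ P) (hPN : P ≤ N)
    (hB : 1 ≤ B) (h : Fin B → Fin L → ℂ) (k : Fin N) :
    Set.range (fun w : Fin (N + P) → ℂ =>
        fun b : Fin B => (dft N *ᵥ (toep N P (h b) *ᵥ w)) k) =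
      Set.range (fun v : Fin (P + 1) → ℂ => effJ N P B hLN h k *ᵥ v) :=
  stmt12_general N L P B hLN hP hPN h k
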